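/- arXiv:1410.2126 — 2 statements merged into one kernel-verified Lean document; each statement's English description precedes it below -/
import Mathlib

section
/- (Λ-criterion for membership in the value set.) Let I be a fractional ideal of O and w ∈ ℤ^p. Then w ∈ val(I) if and only if Λ_i(w, val(I)) ≠ ∅ for every i ∈ {1,…,p}. -/
open scoped Classical

set_option synthInstance.maxHeartbeats 1000000
set_option maxHeartbeats 1000000

noncomputable section

/-- `K`, the total ring of fractions: the product of `p` copies of the field of
formal Laurent series over `ℂ`. -/
abbrev KK (p : ℕ) : Type := Fin p → LaurentSeries ℂ

lemma algebraMap_component {p : ℕ} (c : ℂ) (i : Fin p) :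
    algebraMap ℂ (KK p) c i = HahnSeries.single (0:ℤ) c := by
  rw [Pi.algebraMap_apply, HahnSeries.algebraMap_apply', PowerSeries.algebraMap_apply,
      Algebra.algebraMap_self_apply, HahnSeries.ofPowerSeries_C, HahnSeries.C_apply]

lemma smul_eq_algebraMap_mul {p : ℕ} (c : ℂ) (x : KK p) :
    c • x = algebraMap ℂ (KK p) c * x := by
  funext i
  rw [Pi.smul_apply, Pi.mul_apply, algebraMap_component,
      HahnSeries.single_zero_mul_eq_smul]

/-- The `t`-adic order of a Laurent series, with `⊤` for the zero series. -/
def valC (g : LaurentSeries ℂ) : WithTop ℤ :=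
  if g = 0 then ⊤ else (g.order : WithTop ℤ)

/-- The value vector `val(g) = (val_1 g, …, val_p g)`. -/
def valVec {p : ℕ} (g : KK p) : Fin p → WithTop ℤ := fun i => valC (g i)

/-- The set `t^α·O~` of tuples of Laurent series whose `i`-th component has all
coefficients in degrees below `α i` equal to zero (equivalently, whose `i`-th
component has `t`-adic order at least `α i`), as a `ℂ`-submodule of `K`.
For `α = 0` this is `O~` itself. -/
def stdMod (p : ℕ) (α : Fin p → ℤ) : Submodule ℂ (KK p) where
  carrier := {g | ∀ i, ∀ j : ℤ, j < α i → (g i).coeff j = 0}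
  add_mem' := by
    intro a b ha hb i j hj
    simp [HahnSeries.coeff_add, ha i j hj, hb i j hj]
  zero_mem' := by
    intro i j hj
    simp
  smul_mem' := by
    intro c a ha i j hj
    simp [HahnSeries.coeff_smul, ha i j hj]

/-- The dual `S^∨ = {h ∈ K : h·S ⊆ O}` of a subset `S ⊆ K`, as a
`ℂ`-submodule of `K`. -/
def dualMod {p : ℕ} (O : Subalgebra ℂ (KK p)) (S : Set (KK p)) :
    Submodule ℂ (KK p) where
  carrier := {h | ∀ g ∈ S, h * g ∈ O}
  add_mem' := by
    intro a b ha hb g hg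
    simpa [add_mul] using add_mem (ha g hg) (hb g hg)
  zero_mem' := by
    intro g hg
    simpa using O.zero_mem
  smul_mem' := by
    intro c a ha g hg
    rw [smul_eq_algebraMap_mul, mul_assoc]
    exact O.mul_mem (O.algebraMap_mem c) (ha g hg)

/-- `val(S)`: values of the non-zerodivisors of `K` (elements all of whose
components are nonzero) belonging to `S`. -/
def vals {p : ℕ} (S : Set (KK p)) : Set (Fin p → ℤ) :=
  {v | ∃ g ∈ S, ∀ i, valC (g i) = (v i : WithTop ℤ)}

/-- `valbar(S)`: values of all elements of `S`. -/
def valsBar {p : ℕ} (S : Set (KK p)) : Set (Fin p → WithTop ℤ) :=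
  {v | ∃ g ∈ S, ∀ i, valC (g i) = v i}

/-- `I` is a fractional ideal of `O`: an `O`-stable `ℂ`-submodule of `K` which
is finitely generated over `O` and contains a non-zerodivisor of `K`. -/
def IsFracIdeal {p : ℕ} (O : Subalgebra ℂ (KK p)) (I : Submodule ℂ (KK p)) : Prop :=
  (∀ a ∈ O, ∀ x ∈ I, a * x ∈ I) ∧
  (∃ s : Finset (KK p), (↑s : Set (KK p)) ⊆ (I : Set (KK p)) ∧
    ∀ x ∈ I, ∃ a : KK p → KK p, (∀ g ∈ s, a g ∈ O) ∧ x = ∑ g ∈ s, a g * g) ∧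
  (∃ g ∈ I, ∀ i, g i ≠ 0)

/-- `Δ_i(v, M)`. -/
def DeltaI {p : ℕ} (i : Fin p) (v : Fin p → ℤ) (M : Set (Fin p → ℤ)) :
    Set (Fin p → ℤ) :=
  {α ∈ M | α i = v i ∧ ∀ j, j ≠ i → v j < α j}

/-- `Δ(v, M) = ⋃ i, Δ_i(v, M)`. -/
def DeltaSet {p : ℕ} (v : Fin p → ℤ) (M : Set (Fin p → ℤ)) : Set (Fin p → ℤ) :=
  ⋃ i : Fin p, DeltaI i v M

/-- `Λ_i(v, M)`. -/
def LamSet {p : ℕ} (i : Fin p) (v : Fin p → ℤ) (M : Set (Fin p → ℤ)) :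
    Set (Fin p → ℤ) :=
  {α ∈ M | α i = v i ∧ v ≤ α}

/-- `dim_ℂ (B / A)`: the dimension of the image of `B` in `K ⧸ A`
(which is canonically `B/(A ∩ B)`). -/
def qdim {p : ℕ} (A B : Submodule ℂ (KK p)) : ℕ :=
  Module.finrank ℂ ↥(B.map A.mkQ)

/-- `c_I(v) = dim_ℂ (I_v / I_{v+1})`, where `I_v = {g ∈ I : val g ≥ v}`. -/
def cI {p : ℕ} (I : Submodule ℂ (KK p)) (v : Fin p → ℤ) : ℕ :=
  qdim (I ⊓ stdMod p (v + 1)) (I ⊓ stdMod p v)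

/-- `α_I(v) = Σ_{J ⊆ {1,…,p}} (−1)^{p−|J|} c_I(v − e_J)`. -/
def alphaI {p : ℕ} (I : Submodule ℂ (KK p)) (v : Fin p → ℤ) : ℤ :=
  ∑ J : Finset (Fin p),
    (-1 : ℤ) ^ (p - J.card) * cI I (fun j => v j - if j ∈ J then 1 else 0)

/-- `O` itself, as a `ℂ`-submodule of `K`. -/
def algSubmodule {p : ℕ} (O : Subalgebra ℂ (KK p)) : Submodule ℂ (KK p) where
  carrier := O
  add_mem' := fun ha hb => O.add_mem ha hb
  zero_mem' := O.zero_mem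
  smul_mem' := fun c x hx => by
    rw [smul_eq_algebraMap_mul]
    exact O.mul_mem (O.algebraMap_mem c) hx

/-!
The elements of `I` of value `≥ w` form a `ℂ`-subspace `I ∩ t^w·O~`, and `w ∈ val(I)` means that
one of them has nonzero `w_i`-th coefficient in every component `i`. An element of `Λ_i(w, val I)`
provides an element of the subspace with nonzero `w_i`-th coefficient in component `i`. Since `ℂ`
is infinite, the subspace is not the union of the kernels of these `p` coefficient functionals.
-/

theorem HahnSeries.orderTop_eq_coe_iff {Γ R : Type*} [LinearOrder Γ] [Zero R]
    {x : HahnSeries Γ R} {n : Γ} :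
    x.orderTop = n ↔ x.coeff n ≠ 0 ∧ ∀ j < n, x.coeff j = 0 := by
  refine ⟨fun h => ⟨coeff_orderTop_ne h, fun j hj => coeff_eq_zero_of_lt_orderTop ?_⟩,
    fun ⟨hn, hlt⟩ => le_antisymm (orderTop_le_of_coeff_ne_zero hn) ?_⟩
  · exact h ▸ WithTop.coe_lt_coe.2 hj
  · exact le_orderTop_iff_forall.2 fun j hj => hlt j (WithTop.coe_lt_coe.1 hj)

theorem valC_eq_orderTop (g : LaurentSeries ℂ) : valC g = g.orderTop := by
  by_cases hg : g = 0
  · simp [valC, hg]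
  · rw [valC, if_neg hg, HahnSeries.order_eq_orderTop_of_ne_zero hg]

theorem stdMod_anti {p : ℕ} : Antitone (stdMod p) :=
  fun _ _ hαβ _ hg i j hj => hg i j (hj.trans_le (hαβ i))

theorem mem_vals_iff {p : ℕ} {S : Set (KK p)} {w : Fin p → ℤ} :
    w ∈ vals S ↔ ∃ g ∈ S, g ∈ stdMod p w ∧ ∀ i, (g i).coeff (w i) ≠ 0 := by
  simp only [vals, valC_eq_orderTop, HahnSeries.orderTop_eq_coe_iff]
  exact ⟨fun ⟨g, hgS, hg⟩ => ⟨g, hgS, fun i => (hg i).2, fun i => (hg i).1⟩,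
    fun ⟨g, hgS, hgw, hg⟩ => ⟨g, hgS, fun i => ⟨hg i, hgw i⟩⟩⟩

theorem exists_mem_stdMod_coeff_ne_zero_of_lamSet_nonempty {p : ℕ} {S : Set (KK p)}
    {w : Fin p → ℤ} {i : Fin p} (h : (LamSet i w (vals S)).Nonempty) :
    ∃ g ∈ S, g ∈ stdMod p w ∧ (g i).coeff (w i) ≠ 0 := by
  obtain ⟨α, hα, hαi, hwα⟩ := h
  obtain ⟨g, hgS, hgα, hg⟩ := mem_vals_iff.1 hα
  exact ⟨g, hgS, stdMod_anti hwα hgα, hαi ▸ hg i⟩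

theorem mem_vals_iff_lambda_nonempty_general {p : ℕ} (I : Submodule ℂ (KK p)) (w : Fin p → ℤ) :
    w ∈ vals (I : Set (KK p)) ↔
      ∀ i : Fin p, (LamSet i w (vals (I : Set (KK p)))).Nonempty := by
  refine ⟨fun hw i => ⟨w, hw, rfl, le_rfl⟩, fun hΛ => ?_⟩
  let coeffAt (i : Fin p) : Module.Dual ℂ (KK p) :=
    (HahnSeries.coeff.linearMap (w i)).comp (LinearMap.proj i)
  have hcoeffAt (i : Fin p) : ∃ g ∈ I ⊓ stdMod p w, coeffAt i g ≠ 0 := by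
    obtain ⟨g, hgI, hgw, hg⟩ := exists_mem_stdMod_coeff_ne_zero_of_lamSet_nonempty (hΛ i)
    exact ⟨g, ⟨hgI, hgw⟩, hg⟩
  obtain ⟨g, ⟨hgI, hgw⟩, hg⟩ :=
    Module.Dual.exists_forall_mem_ne_zero_of_forall_exists _ coeffAt hcoeffAt
  exact mem_vals_iff.2 ⟨g, hgI, hgw, hg⟩

/-- **Λ-criterion for membership in the value set**: `w ∈ val(I)` iff
`Λ_i(w, val I) ≠ ∅` for every `i`. -/
theorem mem_vals_iff_lambda_nonempty {p : ℕ} (hp : 1 ≤ p) (O : Subalgebra ℂ (KK p))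
    (hO : (O : Set (KK p)) ⊆ (stdMod p 0 : Set (KK p)))
    (I : Submodule ℂ (KK p)) (hI : IsFracIdeal O I) (w : Fin p → ℤ) :
    w ∈ vals (I : Set (KK p)) ↔
      ∀ i : Fin p, (LamSet i w (vals (I : Set (KK p)))).Nonempty :=
  mem_vals_iff_lambda_nonempty_general I w
end
end

section
/- For every fractional ideal I of O and every v ∈ ℤ^p, c_{I^∨}(v) = p − c_I(γ − v − 1). -/
open scoped Classical

set_option synthInstance.maxHeartbeats 1000000
set_option maxHeartbeats 1000000

noncomputable section

/-!
Put `N = I^∨`. For every `w`, `(N + t^w O~)^∨ = I^∨∨ ∩ (t^w O~)^∨ = I ∩ t^{γ-w} O~ = I_{γ-w}`,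
so Gorenstein duality turns `c_I(γ - v - 1) = dim (I_{γ-v-1} / I_{γ-v})` into
`dim ((N + t^v O~) / (N + t^{v+1} O~))`. Reading off the coefficients of degree `v` identifies this
quotient with `ℂ^p` modulo the image of `N_v`, and that image has dimension `c_N(v)`.
Duality may be applied because `N + t^w O~` is `O`-stable and squeezed between two lattices
`t^α O~`, hence a fractional ideal.
-/

namespace Submodule

variable {R V W : Type*} [Ring R] [AddCommGroup V] [Module R V] [AddCommGroup W] [Module R W]

-- Both sides are `B ⧸ (A ⊓ B)`.
noncomputable def mapMkQEquivMap {A B : Submodule R V} (f : V →ₗ[R] W)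
    (h : ∀ x ∈ B, x ∈ A ↔ f x = 0) : B.map A.mkQ ≃ₗ[R] B.map f :=
  have hker : LinearMap.ker (A.mkQ ∘ₗ B.subtype) = LinearMap.ker (f ∘ₗ B.subtype) := by
    ext x
    simpa using h x x.2
  (LinearEquiv.ofEq _ _ (by rw [LinearMap.range_comp, range_subtype])).symm ≪≫ₗ
    (A.mkQ ∘ₗ B.subtype).quotKerEquivRange.symm ≪≫ₗ quotEquivOfEq _ _ hker ≪≫ₗ
    (f ∘ₗ B.subtype).quotKerEquivRange ≪≫ₗ
    LinearEquiv.ofEq _ _ (by rw [LinearMap.range_comp, range_subtype])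

lemma map_mkQ_sup_of_le {A B C : Submodule R V} (h : B ≤ A) :
    (B ⊔ C).map A.mkQ = C.map A.mkQ := by
  rw [map_sup, sup_eq_right]
  exact ((map_mono h).trans (mkQ_map_self A).le).trans bot_le

end Submodule

lemma exists_finset_subset_span_of_finiteDimensional {K S A : Type*} [Field K] [Semiring S]
    [SMul K S] [AddCommGroup A] [Module K A] [Module S A] [IsScalarTower K S A]
    {M L : Submodule K A} {g : A} (hg : g ∈ M) (hL : ∀ y ∈ L, y ∈ Submodule.span S {g})
    (hM : FiniteDimensional K (M.map L.mkQ)) :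
    ∃ s : Finset A, (s : Set A) ⊆ M ∧ ∀ x ∈ M, x ∈ Submodule.span S (s : Set A) := by
  obtain ⟨T, hT⟩ := (Submodule.fg_iff_finiteDimensional _).mpr hM
  have hTM : (T : Set (A ⧸ L)) ⊆ L.mkQ '' M := by
    rw [← Submodule.map_coe, ← hT]
    exact Submodule.subset_span
  obtain ⟨s, hsM, rfl⟩ := Finset.subset_set_image_iff.mp hTM
  refine ⟨insert g s, by simpa [Set.insert_subset_iff] using ⟨hg, hsM⟩, fun x hx => ?_⟩
  have hxM : x ∈ Submodule.span K s ⊔ L := by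
    rw [sup_comm, ← Submodule.comap_map_mkQ, Submodule.map_span, ← Finset.coe_image, hT]
    exact Submodule.mem_map_of_mem hx
  obtain ⟨y, hy, z, hz, rfl⟩ := Submodule.mem_sup.mp hxM
  rw [Finset.coe_insert, Submodule.span_insert]
  exact add_mem (Submodule.mem_sup_right (Submodule.span_le_restrictScalars K S _ hy))
    (Submodule.mem_sup_left (hL z hz))

lemma exists_eq_sum_mul_of_mem_span {K A : Type*} [CommSemiring K] [CommRing A] [Algebra K A]
    (O : Subalgebra K A) {s : Finset A} {x : A} (hx : x ∈ Submodule.span O (s : Set A)) :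
    ∃ a : A → A, (∀ g ∈ s, a g ∈ O) ∧ x = ∑ g ∈ s, a g * g := by
  obtain ⟨f, -, rfl⟩ := Submodule.mem_span_finset.mp hx
  exact ⟨fun g => f g, fun g _ => (f g).2, rfl⟩

section LaurentTuples

variable {p : ℕ}

-- Not found by instance search: the componentwise `ℂ`-action on `KK p` is not definitionally
-- the one coming from `Algebra ℂ (KK p)`.
instance (O : Subalgebra ℂ (KK p)) : IsScalarTower ℂ O (KK p) where
  smul_assoc c o x := by
    rw [Subalgebra.smul_def, Subalgebra.smul_def, smul_eq_algebraMap_mul, Subalgebra.coe_smul,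
      Algebra.smul_def, smul_eq_mul, smul_eq_mul, mul_assoc]

lemma stdMod_anti_s11 {α β : Fin p → ℤ} (h : α ≤ β) : stdMod p β ≤ stdMod p α :=
  fun _ hg i j hj => hg i j (hj.trans_le (h i))

lemma mem_stdMod_order (g : KK p) : g ∈ stdMod p (fun i => (g i).order) :=
  fun _ _ => HahnSeries.coeff_eq_zero_of_lt_order

lemma mul_mem_stdMod {α β : Fin p → ℤ} {x y : KK p} (hx : x ∈ stdMod p α)
    (hy : y ∈ stdMod p β) : x * y ∈ stdMod p (α + β) := by
  intro i j hj
  rw [Pi.mul_apply, HahnSeries.coeff_mul]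
  refine Finset.sum_eq_zero fun kl hkl => ?_
  obtain ⟨hk, hl, rfl⟩ := Finset.mem_antidiagonal.mp hkl
  by_cases hki : kl.1 < α i
  · rw [hx i _ hki, zero_mul]
  · rw [hy i _ (by simp only [Pi.add_apply] at hj; omega), mul_zero]

def tpow (p : ℕ) (w : Fin p → ℤ) : KK p := fun i => HahnSeries.single (w i) 1

lemma tpow_mem_stdMod (w : Fin p → ℤ) : tpow p w ∈ stdMod p w :=
  fun _ _ hj => HahnSeries.coeff_single_of_ne hj.ne

lemma tpow_ne_zero (w : Fin p → ℤ) (i : Fin p) : tpow p w i ≠ 0 :=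
  HahnSeries.single_ne_zero one_ne_zero

lemma tpow_neg_mul_tpow (w : Fin p → ℤ) : tpow p (-w) * tpow p w = 1 := by
  funext i
  simp [tpow, HahnSeries.single_mul_single]

lemma one_mem_stdMod_zero : (1 : KK p) ∈ stdMod p 0 := by
  intro i j hj
  exact (HahnSeries.coeff_one (R := ℂ) (a := j)).trans (if_neg (ne_of_lt hj))

end LaurentTuples

section Duality

variable {p : ℕ} {O : Subalgebra ℂ (KK p)}

lemma dualMod_anti {S T : Set (KK p)} (h : S ⊆ T) : dualMod O T ≤ dualMod O S :=
  fun _ hh g hg => hh g (h hg)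

lemma mul_mem_dualMod {S : Set (KK p)} {a h : KK p} (ha : a ∈ O) (hh : h ∈ dualMod O S) :
    a * h ∈ dualMod O S :=
  fun g hg => mul_assoc a h g ▸ O.mul_mem ha (hh g hg)

lemma dualMod_sup (A B : Submodule ℂ (KK p)) :
    dualMod O ↑(A ⊔ B) = dualMod O ↑A ⊓ dualMod O ↑B := by
  refine le_antisymm (le_inf (dualMod_anti (SetLike.coe_subset_coe.mpr le_sup_left))
    (dualMod_anti (SetLike.coe_subset_coe.mpr le_sup_right))) ?_
  rintro h ⟨hA, hB⟩ g hg
  obtain ⟨a, ha, b, hb, rfl⟩ := Submodule.mem_sup.mp hg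
  rw [mul_add]
  exact O.add_mem (hA a ha) (hB b hb)

lemma mem_of_mem_stdMod_conductor {c : Fin p → ℤ}
    (hc : dualMod O ↑(stdMod p 0) = stdMod p c) {g : KK p} (hg : g ∈ stdMod p c) : g ∈ O := by
  rw [← hc] at hg
  simpa using hg 1 one_mem_stdMod_zero

lemma dualMod_stdMod {c : Fin p → ℤ} (hc : dualMod O ↑(stdMod p 0) = stdMod p c)
    (w : Fin p → ℤ) : dualMod O ↑(stdMod p w) = stdMod p (c - w) := by
  ext h
  constructor
  · intro hh
    have hht : h * tpow p w ∈ stdMod p c := by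
      rw [← hc]
      intro g hg
      rw [mul_assoc]
      exact hh _ (by simpa using mul_mem_stdMod (tpow_mem_stdMod w) hg)
    have := mul_mem_stdMod hht (tpow_mem_stdMod (-w))
    rwa [mul_assoc, mul_comm (tpow p w), tpow_neg_mul_tpow, mul_one, ← sub_eq_add_neg] at this
  · intro hh g hg
    exact mem_of_mem_stdMod_conductor hc (by simpa using mul_mem_stdMod hh hg)

lemma le_order_of_mem_stdMod {α : Fin p → ℤ} {x : KK p} (hx : x ∈ stdMod p α) {i : Fin p}
    (hxi : x i ≠ 0) : α i ≤ (x i).order := by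
  by_contra hlt
  exact hxi (HahnSeries.coeff_order_eq_zero.mp (hx i _ (not_le.mp hlt)))

lemma dualMod_le_stdMod (hO : (O : Set (KK p)) ⊆ stdMod p 0) {S : Set (KK p)} {g : KK p}
    (hg : g ∈ S) (hg0 : ∀ i, g i ≠ 0) :
    dualMod O S ≤ stdMod p (-fun i => (g i).order) := by
  intro h hh i j hj
  by_cases hhi : h i = 0
  · simp [hhi]
  have hord := le_order_of_mem_stdMod (hO (hh g hg)) (mul_ne_zero hhi (hg0 i))
  rw [Pi.mul_apply, HahnSeries.order_mul hhi (hg0 i)] at hord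
  simp only [Pi.neg_apply, Pi.zero_apply] at hj hord
  exact HahnSeries.coeff_eq_zero_of_lt_order (by omega)

lemma exists_le_stdMod_of_isFracIdeal (hO : (O : Set (KK p)) ⊆ stdMod p 0)
    {I : Submodule ℂ (KK p)} (hI : IsFracIdeal O I) : ∃ e, I ≤ stdMod p e := by
  obtain ⟨-, ⟨s, -, hs⟩, -⟩ := hI
  obtain ⟨e, he⟩ := (s.finite_toSet.image fun g i => (g i).order).bddBelow
  refine ⟨e, fun x hx => ?_⟩
  obtain ⟨a, ha, rfl⟩ := hs x hx
  refine Submodule.sum_mem _ fun g hg => stdMod_anti_s11 (he ⟨g, hg, rfl⟩) ?_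
  simpa using mul_mem_stdMod (hO (ha g hg)) (mem_stdMod_order g)

end Duality

section Coefficients

variable {p : ℕ}

def coeffAt (v : Fin p → ℤ) : KK p →ₗ[ℂ] (Fin p → ℂ) where
  toFun g i := (g i).coeff (v i)
  map_add' _ _ := by ext; simp
  map_smul' _ _ := by ext; simp

def windowCoeffs (d b : Fin p → ℤ) :
    KK p →ₗ[ℂ] ((Σ i : Fin p, Finset.Ico (d i) (b i)) → ℂ) where
  toFun g k := (g k.1).coeff k.2
  map_add' _ _ := by ext; simp
  map_smul' _ _ := by ext; simp

lemma finiteDimensional_map_mkQ_stdMod (d b : Fin p → ℤ) :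
    FiniteDimensional ℂ ((stdMod p d).map (stdMod p b).mkQ) := by
  refine (Submodule.mapMkQEquivMap (windowCoeffs d b) fun x hx => ⟨?_, ?_⟩).symm.finiteDimensional
  · intro hxb
    ext ⟨i, j, hj⟩
    exact hxb i j (Finset.mem_Ico.mp hj).2
  · intro hx0 i j hj
    by_cases hjd : j < d i
    · exact hx i j hjd
    · exact congrFun hx0 ⟨i, j, Finset.mem_Ico.mpr ⟨not_lt.mp hjd, hj⟩⟩

lemma mem_stdMod_add_one_iff {v : Fin p → ℤ} {x : KK p} (hx : x ∈ stdMod p v) :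
    x ∈ stdMod p (v + 1) ↔ coeffAt v x = 0 := by
  constructor
  · intro hx1
    funext i
    exact hx1 i (v i) (by simp)
  · intro hx0 i j hj
    rcases (Int.lt_add_one_iff.mp hj).lt_or_eq with hjv | rfl
    · exact hx i j hjv
    · exact congrFun hx0 i

lemma map_coeffAt_stdMod (v : Fin p → ℤ) : (stdMod p v).map (coeffAt v) = ⊤ := by
  refine Submodule.eq_top_iff'.mpr fun a => ⟨fun i => HahnSeries.single (v i) (a i), ?_, ?_⟩
  · exact fun i j hj => HahnSeries.coeff_single_of_ne hj.ne
  · funext i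
    exact HahnSeries.coeff_single_same _ _

lemma cI_eq_finrank_map_coeffAt (N : Submodule ℂ (KK p)) (v : Fin p → ℤ) :
    cI N v = Module.finrank ℂ ((N ⊓ stdMod p v).map (coeffAt v)) :=
  (Submodule.mapMkQEquivMap (A := N ⊓ stdMod p (v + 1)) (B := N ⊓ stdMod p v) (coeffAt v)
    fun _ hx =>
    ⟨fun hx1 => (mem_stdMod_add_one_iff hx.2).mp hx1.2,
      fun hx0 => ⟨hx.1, (mem_stdMod_add_one_iff hx.2).mpr hx0⟩⟩).finrank_eq

-- An element of `t^v O~` lies in `N + t^{v+1} O~` iff its degree-`v` coefficients lie in the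
-- image `U` of `N_v`, so `(N + t^v O~) / (N + t^{v+1} O~) ≅ ℂ^p / U`.
lemma qdim_sup_stdMod_add_cI (N : Submodule ℂ (KK p)) (v : Fin p → ℤ) :
    qdim (N ⊔ stdMod p (v + 1)) (N ⊔ stdMod p v) + cI N v = p := by
  set U := (N ⊓ stdMod p v).map (coeffAt v)
  have hmem : ∀ x ∈ stdMod p v, x ∈ N ⊔ stdMod p (v + 1) ↔ U.mkQ (coeffAt v x) = 0 := by
    intro x hx
    rw [Submodule.mkQ_apply, Submodule.Quotient.mk_eq_zero]
    constructor
    · intro hxN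
      obtain ⟨n, hn, y, hy, rfl⟩ := Submodule.mem_sup.mp hxN
      have hy0 := (mem_stdMod_add_one_iff (stdMod_anti_s11 (by simp) hy)).mp hy
      have hnv : n ∈ stdMod p v := by simpa using sub_mem hx (stdMod_anti_s11 (by simp) hy)
      rw [map_add, hy0, add_zero]
      exact Submodule.mem_map_of_mem (Submodule.mem_inf.mpr ⟨hn, hnv⟩)
    · rintro ⟨n, ⟨hn, hnv⟩, hxn⟩
      have hxn1 : x - n ∈ stdMod p (v + 1) :=
        (mem_stdMod_add_one_iff (sub_mem hx hnv)).mpr (by simp [hxn])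
      simpa using Submodule.add_mem_sup hn hxn1
  have hquot : qdim (N ⊔ stdMod p (v + 1)) (N ⊔ stdMod p v) =
      Module.finrank ℂ ((Fin p → ℂ) ⧸ U) := by
    rw [qdim, Submodule.map_mkQ_sup_of_le le_sup_left,
      (Submodule.mapMkQEquivMap (U.mkQ ∘ₗ coeffAt v) hmem).finrank_eq, Submodule.map_comp,
      map_coeffAt_stdMod, Submodule.map_top, Submodule.range_mkQ, finrank_top]
  rw [hquot, cI_eq_finrank_map_coeffAt, Submodule.finrank_quotient_add_finrank,
    Module.finrank_fin_fun]

end Coefficients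

section FractionalIdeals

variable {p : ℕ} {O : Subalgebra ℂ (KK p)} {c : Fin p → ℤ}

-- `t^{a+c} O~ ⊆ O·t^a ⊆ M`, and `M / t^{a+c} O~` is finite-dimensional.
lemma isFracIdeal_of_stdMod_le_of_le_stdMod (hc : dualMod O ↑(stdMod p 0) = stdMod p c)
    {M : Submodule ℂ (KK p)} (hstab : ∀ a ∈ O, ∀ x ∈ M, a * x ∈ M) {a d : Fin p → ℤ}
    (hlow : stdMod p a ≤ M) (hup : M ≤ stdMod p d) : IsFracIdeal O M := by
  have hspan : ∀ y ∈ stdMod p (a + c), y ∈ Submodule.span O {tpow p a} := by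
    intro y hy
    have hyO : y * tpow p (-a) ∈ O := mem_of_mem_stdMod_conductor hc
      (by simpa using mul_mem_stdMod hy (tpow_mem_stdMod (-a)))
    have hy_eq : y = (⟨_, hyO⟩ : O) • tpow p a := by
      simp [Subalgebra.smul_def, mul_assoc, tpow_neg_mul_tpow]
    rw [hy_eq]
    exact Submodule.smul_mem _ _ (Submodule.mem_span_singleton_self _)
  have hfd : FiniteDimensional ℂ (M.map (stdMod p (a + c)).mkQ) :=
    haveI := finiteDimensional_map_mkQ_stdMod d (a + c)
    Submodule.finiteDimensional_of_le (Submodule.map_mono hup)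
  obtain ⟨s, hsM, hs⟩ :=
    exists_finset_subset_span_of_finiteDimensional (hlow (tpow_mem_stdMod a)) hspan hfd
  exact ⟨hstab, ⟨s, hsM, fun x hx => exists_eq_sum_mul_of_mem_span O (hs x hx)⟩,
    ⟨tpow p a, hlow (tpow_mem_stdMod a), tpow_ne_zero a⟩⟩

lemma isFracIdeal_dualMod_sup_stdMod (hO : (O : Set (KK p)) ⊆ stdMod p 0)
    (hc : dualMod O ↑(stdMod p 0) = stdMod p c) {I : Submodule ℂ (KK p)} (hI : IsFracIdeal O I)
    (w : Fin p → ℤ) : IsFracIdeal O (dualMod O ↑I ⊔ stdMod p w) := by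
  obtain ⟨e, hIe⟩ := exists_le_stdMod_of_isFracIdeal hO hI
  obtain ⟨g, hgI, hg0⟩ := hI.2.2
  refine isFracIdeal_of_stdMod_le_of_le_stdMod hc (a := (c - e) ⊔ w)
    (d := (-fun i => (g i).order) ⊓ w) ?_ ?_ ?_
  · intro a ha x hx
    obtain ⟨y, hy, z, hz, rfl⟩ := Submodule.mem_sup.mp hx
    rw [mul_add]
    exact Submodule.add_mem_sup (mul_mem_dualMod ha hy) (by simpa using mul_mem_stdMod (hO ha) hz)
  · calc stdMod p ((c - e) ⊔ w) ≤ stdMod p (c - e) := stdMod_anti_s11 le_sup_left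
      _ = dualMod O ↑(stdMod p e) := (dualMod_stdMod hc e).symm
      _ ≤ dualMod O ↑I := dualMod_anti hIe
      _ ≤ _ := le_sup_left
  · exact sup_le ((dualMod_le_stdMod hO hgI hg0).trans (stdMod_anti_s11 inf_le_left))
      (stdMod_anti_s11 inf_le_right)

end FractionalIdeals

theorem cI_dual_general {p : ℕ} (O : Subalgebra ℂ (KK p))
    (hO : (O : Set (KK p)) ⊆ (stdMod p 0 : Set (KK p)))
    (γ : Fin p → ℕ)
    (hγ : dualMod O (stdMod p 0 : Set (KK p)) = stdMod p (fun i => (γ i : ℤ)))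
    (hG1 : ∀ I : Submodule ℂ (KK p), IsFracIdeal O I →
      dualMod O ((dualMod O (I : Set (KK p)) : Submodule ℂ (KK p)) : Set (KK p)) = I)
    (hG2 : ∀ I J : Submodule ℂ (KK p), IsFracIdeal O I → IsFracIdeal O J → I ≤ J →
      qdim I J = qdim (dualMod O (J : Set (KK p))) (dualMod O (I : Set (KK p))))
    (I : Submodule ℂ (KK p)) (hI : IsFracIdeal O I) (v : Fin p → ℤ) :
    (cI (dualMod O (I : Set (KK p))) v : ℤ) =
      (p : ℤ) - cI I (fun i => (γ i : ℤ) - v i - 1) := by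
  have hdual : ∀ w, dualMod O ↑(dualMod O ↑I ⊔ stdMod p w) =
      I ⊓ stdMod p ((fun i => (γ i : ℤ)) - w) :=
    fun w => by rw [dualMod_sup, hG1 I hI, dualMod_stdMod hγ]
  have hduality := hG2 _ _ (isFracIdeal_dualMod_sup_stdMod hO hγ hI (v + 1))
    (isFracIdeal_dualMod_sup_stdMod hO hγ hI v) (sup_le_sup_left (stdMod_anti_s11 (by simp)) _)
  have hcI : cI I (fun i => (γ i : ℤ) - v i - 1) =
      qdim (I ⊓ stdMod p ((fun i => (γ i : ℤ)) - v))
        (I ⊓ stdMod p ((fun i => (γ i : ℤ)) - (v + 1))) := by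
    rw [cI]
    congr 3 <;> ext i <;> simp only [Pi.add_apply, Pi.sub_apply, Pi.one_apply] <;> ring
  have hcodim := qdim_sup_stdMod_add_cI (dualMod O ↑I) v
  rw [hduality, hdual, hdual, ← hcI] at hcodim
  omega

/-- `c_{I^∨}(v) = p − c_I(γ − v − 1)`. -/
theorem cI_dual {p : ℕ} (hp : 1 ≤ p) (O : Subalgebra ℂ (KK p))
    (hO : (O : Set (KK p)) ⊆ (stdMod p 0 : Set (KK p)))
    (γ : Fin p → ℕ)
    (hγ : dualMod O (stdMod p 0 : Set (KK p)) = stdMod p (fun i => (γ i : ℤ)))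
    (hG1 : ∀ I : Submodule ℂ (KK p), IsFracIdeal O I →
      dualMod O ((dualMod O (I : Set (KK p)) : Submodule ℂ (KK p)) : Set (KK p)) = I)
    (hG2 : ∀ I J : Submodule ℂ (KK p), IsFracIdeal O I → IsFracIdeal O J → I ≤ J →
      qdim I J = qdim (dualMod O (J : Set (KK p))) (dualMod O (I : Set (KK p))))
    (hG3 : DeltaSet (fun i => (γ i : ℤ) - 1) (vals (O : Set (KK p))) = ∅)
    (I : Submodule ℂ (KK p)) (hI : IsFracIdeal O I) (v : Fin p → ℤ) :
    (cI (dualMod O (I : Set (KK p))) v : ℤ) =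
      (p : ℤ) - cI I (fun i => (γ i : ℤ) - v i - 1) :=
  cI_dual_general O hO γ hγ hG1 hG2 I hI v
end
end
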